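/- Let $b \in BMO(\mathbb{R}^n)$, $1 < q < \infty$, and let $\mu$ be a weight in $RH_r$ for some $r > 1$. Then there is a constant $C$ (depending on $n$, $q$, $r$, and the $RH_r$ constant of $\mu$) such that for every ball $B$, $\big(\frac{1}{\mu(B)} \int_B |b(x) - b_B|^q \mu(x)\,dx\big)^{1/q} \le C \|b\|_*$. -/

import Mathlib

open MeasureTheory Metric Set
open scoped ENNReal NNReal

noncomputable section

abbrev Rn (n : ℕ) := EuclideanSpace ℝ (Fin n)

/-- The integral of an `ℝ≥0∞`-valued weight over a ball: `w(B(z,r))`. -/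
def wInt {n : ℕ} (w : Rn n → ℝ≥0∞) (z : Rn n) (r : ℝ) : ℝ≥0∞ :=
  ∫⁻ x in ball z r, w x

/-- The `L^s` norm of `Ω` on the unit sphere `S^{n-1}`, with respect to surface measure. -/
def sphereNorm (n : ℕ) (s : ℝ≥0∞) (Ω : Rn n → ℝ) : ℝ≥0∞ :=
  eLpNorm (fun y : sphere (0 : Rn n) 1 => Ω (y : Rn n)) s
    ((volume : Measure (Rn n)).toSphere)

/-- `Ω` is homogeneous of degree zero. -/
def HomZero {n : ℕ} (Ω : Rn n → ℝ) : Prop :=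
  ∀ c : ℝ, 0 < c → ∀ y, Ω (c • y) = Ω y

/-- Rough fractional maximal operator `M_{Ω,α}`. -/
def roughFracMax {n : ℕ} (α : ℝ) (Ω f : Rn n → ℝ) (x : Rn n) : ℝ≥0∞ :=
  ⨆ (r : ℝ) (_ : 0 < r),
    ENNReal.ofReal (r ^ (α - n)) *
      ∫⁻ y in {y : Rn n | ‖y‖ ≤ r}, (‖Ω (‖y‖⁻¹ • y)‖₊ : ℝ≥0∞) * (‖f (x - y)‖₊ : ℝ≥0∞)

/-- Fractional maximal operator `M_{α,s}` (with `M_α = M_{α,1}`). -/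
def fracMax {n : ℕ} (α s : ℝ) (f : Rn n → ℝ) (x : Rn n) : ℝ≥0∞ :=
  ⨆ (z : Rn n) (r : ℝ) (_ : 0 < r) (_ : x ∈ ball z r),
    (volume (ball z r) ^ (α * s / n - 1) *
      ∫⁻ y in ball z r, (‖f y‖₊ : ℝ≥0∞) ^ s) ^ (1 / s)

/-- Rough fractional integral operator `T_{Ω,α}`. -/
def roughFracInt {n : ℕ} (α : ℝ) (Ω f : Rn n → ℝ) (x : Rn n) : ℝ :=
  ∫ y, (Ω (‖x - y‖⁻¹ • (x - y)) / ‖x - y‖ ^ ((n : ℝ) - α)) * f y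

/-- Commutator `[b, T_{Ω,α}]`. -/
def commT {n : ℕ} (b : Rn n → ℝ) (α : ℝ) (Ω f : Rn n → ℝ) (x : Rn n) : ℝ :=
  ∫ y, (Ω (‖x - y‖⁻¹ • (x - y)) / ‖x - y‖ ^ ((n : ℝ) - α)) * (b x - b y) * f y

/-- Commutator of the rough fractional maximal operator, `[b, M_{Ω,α}]`. -/
def commMax {n : ℕ} (b : Rn n → ℝ) (α : ℝ) (Ω f : Rn n → ℝ) (x : Rn n) : ℝ≥0∞ :=
  ⨆ (r : ℝ) (_ : 0 < r),
    ENNReal.ofReal (r ^ (α - n)) *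
      ∫⁻ y in {y : Rn n | ‖y - x‖ ≤ r},
        (‖b x - b y‖₊ : ℝ≥0∞) * (‖Ω (x - y)‖₊ : ℝ≥0∞) * (‖f y‖₊ : ℝ≥0∞)

/-- Two-weight Morrey norm `‖f‖_{L^{p,κ}(u,v)}`. -/
def morreyNorm {n : ℕ} (p κ : ℝ) (u v : Rn n → ℝ≥0∞) (f : Rn n → ℝ) : ℝ≥0∞ :=
  ⨆ (z : Rn n) (r : ℝ) (_ : 0 < r),
    ((wInt v z r) ^ (-κ) * ∫⁻ x in ball z r, (‖f x‖₊ : ℝ≥0∞) ^ p * u x) ^ (1 / p)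

/-- Morrey norm of an `ℝ≥0∞`-valued function with one weight. -/
def morreyNormE {n : ℕ} (p κ : ℝ) (v : Rn n → ℝ≥0∞) (g : Rn n → ℝ≥0∞) : ℝ≥0∞ :=
  ⨆ (z : Rn n) (r : ℝ) (_ : 0 < r),
    ((wInt v z r) ^ (-κ) * ∫⁻ x in ball z r, g x ^ p * v x) ^ (1 / p)

/-- Average of `b` over the ball `B(z,r)`. -/
def bmoAvg {n : ℕ} (b : Rn n → ℝ) (z : Rn n) (r : ℝ) : ℝ :=
  ⨍ x in ball z r, b x

/-- BMO norm `‖b‖_*`. -/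
def bmoNorm {n : ℕ} (b : Rn n → ℝ) : ℝ≥0∞ :=
  ⨆ (z : Rn n) (r : ℝ) (_ : 0 < r),
    (∫⁻ x in ball z r, (‖b x - bmoAvg b z r‖₊ : ℝ≥0∞)) / volume (ball z r)

/-- The Muckenhoupt `A_p` condition (`1 < p`) with constant `C`. -/
def IsAp {n : ℕ} (p : ℝ) (C : ℝ≥0∞) (w : Rn n → ℝ≥0∞) : Prop :=
  ∀ (z : Rn n) (r : ℝ), 0 < r →
    ((∫⁻ x in ball z r, w x) / volume (ball z r)) *
      ((∫⁻ x in ball z r, w x ^ (-(1 / (p - 1)))) / volume (ball z r)) ^ (p - 1) ≤ C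

/-- The Muckenhoupt `A_1` condition with constant `C`. -/
def IsA1 {n : ℕ} (C : ℝ≥0∞) (w : Rn n → ℝ≥0∞) : Prop :=
  ∀ (z : Rn n) (r : ℝ), 0 < r →
    ∫⁻ x in ball z r, w x ≤ C * volume (ball z r) * essInf w (volume.restrict (ball z r))

/-- The Muckenhoupt–Wheeden `A(p,q)` condition with constant `C`. -/
def IsApq {n : ℕ} (p q : ℝ) (C : ℝ≥0∞) (w : Rn n → ℝ≥0∞) : Prop :=
  ∀ (z : Rn n) (r : ℝ), 0 < r →
    ((∫⁻ x in ball z r, w x ^ q) / volume (ball z r)) ^ (1 / q) *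
      ((∫⁻ x in ball z r, w x ^ (-(p / (p - 1)))) / volume (ball z r)) ^ (1 - 1 / p) ≤ C

/-- The reverse Hölder condition `RH_r` with constant `C`. -/
def IsRH {n : ℕ} (r : ℝ) (C : ℝ≥0∞) (w : Rn n → ℝ≥0∞) : Prop :=
  ∀ (z : Rn n) (ρ : ℝ), 0 < ρ →
    ((∫⁻ x in ball z ρ, w x ^ r) / volume (ball z ρ)) ^ (1 / r) ≤
      C * ((∫⁻ x in ball z ρ, w x) / volume (ball z ρ))

def MemAp {n : ℕ} (p : ℝ) (w : Rn n → ℝ≥0∞) : Prop := ∃ C : ℝ≥0∞, C ≠ ⊤ ∧ IsAp p C w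
def MemA1 {n : ℕ} (w : Rn n → ℝ≥0∞) : Prop := ∃ C : ℝ≥0∞, C ≠ ⊤ ∧ IsA1 C w
def MemApq {n : ℕ} (p q : ℝ) (w : Rn n → ℝ≥0∞) : Prop := ∃ C : ℝ≥0∞, C ≠ ⊤ ∧ IsApq p q C w
def MemRH {n : ℕ} (r : ℝ) (w : Rn n → ℝ≥0∞) : Prop := ∃ C : ℝ≥0∞, C ≠ ⊤ ∧ IsRH r C w

/-!
By the John–Nirenberg inequality, every `L^p` average of `|b - b_B|` over a ball `B` is at most
`C_p ‖b‖_*^p`. Hölder's inequality with the exponents `s = r'` and `r` gives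
`∫_B |b - b_B|^q μ ≤ (∫_B |b - b_B|^{qs})^{1/s} (∫_B μ^r)^{1/r}`; the first factor is at most
`C ‖b‖_*^q |B|^{1/s}` and, by the reverse Hölder condition, the second is at most
`A μ(B) |B|^{-1/s}`.

John–Nirenberg itself (for `‖b‖_* ≤ 1`) goes through the normalised distribution function
`D(M) = sup_B |{x ∈ B | M < |b x - b_B|}| / |B|`. Around the Lebesgue points of
`{x ∈ B | M + c < |b x - b_B|}` one selects, by a stopping time, balls on which the mean
oscillation about `b_B` first exceeds a fixed level; Vitali's covering lemma makes their
five-fold enlargements cover that set, their total measure is at most `|B| / 2`, and on each of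
them the set is contained in `{|b - b_{5B_i}| > M}`. Hence `D(M + c) ≤ D(M) / 2`, so `D` decays
geometrically and the layer-cake sum for `∫_B |b - b_B|^p` converges.
-/

open Filter Topology

section Balls

variable {n : ℕ}

theorem volume_ball_mul (x : Rn n) {a : ℝ} (ha : 0 < a) (t : ℝ) :
    volume (ball x (a * t)) = ENNReal.ofReal (a ^ n) * volume (ball x t) := by
  rw [Measure.addHaar_ball_mul_of_pos _ x ha, finrank_euclideanSpace_fin,
    Measure.addHaar_ball_center volume x]

theorem volume_ball_le_mul (x y : Rn n) {a s t : ℝ} (ha : 0 < a) (hs : s ≤ a * t) :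
    volume (ball x s) ≤ ENNReal.ofReal (a ^ n) * volume (ball y t) := by
  rw [Measure.addHaar_ball_center volume y, ← Measure.addHaar_ball_center volume x]
  exact (measure_mono (ball_subset_ball hs)).trans_eq (volume_ball_mul x ha t)

theorem ball_ae_eq_closedBall (x : Rn n) {t : ℝ} (ht : t ≠ 0) :
    ball x t =ᵐ[volume] closedBall x t := by
  refine ae_eq_set.2 ⟨by simp [sdiff_eq_empty.2 ball_subset_closedBall], ?_⟩
  rw [closedBall_sdiff_ball]
  exact Measure.addHaar_sphere_of_ne_zero volume x ht

end Balls

def oscInt {n : ℕ} (b : Rn n → ℝ) (s : Set (Rn n)) (c : ℝ) : ℝ≥0∞ :=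
  ∫⁻ x in s, (‖b x - c‖₊ : ℝ≥0∞)

section Oscillation

variable {n : ℕ} {b : Rn n → ℝ}

theorem oscInt_mono {s s' : Set (Rn n)} (h : s ⊆ s') (c : ℝ) : oscInt b s c ≤ oscInt b s' c :=
  lintegral_mono_set h

theorem oscInt_le_add (s : Set (Rn n)) (c c' : ℝ) :
    oscInt b s c ≤ oscInt b s c' + ENNReal.ofReal |c' - c| * volume s := by
  calc oscInt b s c ≤ ∫⁻ x in s, ((‖b x - c'‖₊ : ℝ≥0∞) + ENNReal.ofReal |c' - c|) := by
        refine lintegral_mono fun x => ?_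
        rw [← Real.enorm_eq_ofReal_abs]
        have := enorm_add_le (b x - c') (c' - c)
        rwa [sub_add_sub_cancel] at this
    _ = oscInt b s c' + ENNReal.ofReal |c' - c| * volume s := by
        rw [lintegral_add_right _ measurable_const, oscInt, setLIntegral_const]

theorem oscInt_le_bmoNorm_mul (z : Rn n) {ρ : ℝ} (hρ : 0 < ρ) :
    oscInt b (ball z ρ) (bmoAvg b z ρ) ≤ bmoNorm b * volume (ball z ρ) := by
  rw [← ENNReal.div_le_iff (measure_ball_pos _ z hρ).ne' measure_ball_lt_top.ne]
  exact le_iSup₂_of_le (f := fun z ρ => ⨆ _ : 0 < ρ, _) z ρ (le_iSup_of_le hρ le_rfl)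

theorem ofReal_abs_bmoAvg_sub_mul_le (hb : LocallyIntegrable b volume) (x : Rn n) {t : ℝ}
    (ht : 0 < t) (c : ℝ) :
    ENNReal.ofReal |bmoAvg b x t - c| * volume (ball x t) ≤ oscInt b (ball x t) c := by
  have hbB : IntegrableOn b (ball x t) volume :=
    (hb.integrableOn_isCompact (isCompact_closedBall x t)).mono_set ball_subset_closedBall
  have hV : volume.real (ball x t) ≠ 0 :=
    (ENNReal.toReal_pos (measure_ball_pos _ x ht).ne' measure_ball_lt_top.ne).ne'
  have hmean : (bmoAvg b x t - c) * volume.real (ball x t) = ∫ y in ball x t, (b y - c) := by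
    rw [integral_sub hbB (integrableOn_const measure_ball_lt_top.ne), setIntegral_const,
      bmoAvg, setAverage_eq, smul_eq_mul, smul_eq_mul]
    field_simp
  calc ENNReal.ofReal |bmoAvg b x t - c| * volume (ball x t)
      = ENNReal.ofReal ‖∫ y in ball x t, (b y - c)‖ := by
        rw [← hmean, Real.norm_eq_abs, abs_mul, abs_of_nonneg measureReal_nonneg,
          ENNReal.ofReal_mul (abs_nonneg _), ofReal_measureReal measure_ball_lt_top.ne]
    _ ≤ ENNReal.ofReal (∫ y in ball x t, ‖b y - c‖) :=
        ENNReal.ofReal_le_ofReal (norm_integral_le_integral_norm _)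
    _ = oscInt b (ball x t) c := ofReal_integral_norm_eq_lintegral_enorm
        (hbB.sub (integrableOn_const measure_ball_lt_top.ne))

theorem ofReal_abs_bmoAvg_sub_bmoAvg_le (hb : LocallyIntegrable b volume) (x : Rn n) {a t : ℝ}
    (ha : 1 ≤ a) (ht : 0 < t) :
    ENNReal.ofReal |bmoAvg b x t - bmoAvg b x (a * t)| ≤ ENNReal.ofReal (a ^ n) * bmoNorm b := by
  refine (ENNReal.mul_le_mul_iff_left (measure_ball_pos volume x ht).ne'
    measure_ball_lt_top.ne).1 ?_
  calc ENNReal.ofReal |bmoAvg b x t - bmoAvg b x (a * t)| * volume (ball x t)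
      ≤ oscInt b (ball x (a * t)) (bmoAvg b x (a * t)) :=
        (ofReal_abs_bmoAvg_sub_mul_le hb x ht _).trans
          (oscInt_mono (ball_subset_ball (le_mul_of_one_le_left ht.le ha)) _)
    _ ≤ bmoNorm b * volume (ball x (a * t)) := oscInt_le_bmoNorm_mul x (by positivity)
    _ = ENNReal.ofReal (a ^ n) * bmoNorm b * volume (ball x t) := by
        rw [volume_ball_mul x (by linarith) t]
        ring

theorem oscInt_ball_two_mul_le (hb : LocallyIntegrable b volume) (z : Rn n) {ρ : ℝ}
    (hρ : 0 < ρ) :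
    oscInt b (ball z (2 * ρ)) (bmoAvg b z ρ) ≤
      ENNReal.ofReal (1 + 2 ^ n) * bmoNorm b * volume (ball z (2 * ρ)) := by
  have hdiff := ofReal_abs_bmoAvg_sub_bmoAvg_le hb z one_le_two hρ
  rw [abs_sub_comm] at hdiff
  calc oscInt b (ball z (2 * ρ)) (bmoAvg b z ρ)
      ≤ oscInt b (ball z (2 * ρ)) (bmoAvg b z (2 * ρ)) +
          ENNReal.ofReal |bmoAvg b z (2 * ρ) - bmoAvg b z ρ| * volume (ball z (2 * ρ)) :=
        oscInt_le_add _ _ _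
    _ ≤ bmoNorm b * volume (ball z (2 * ρ)) +
          ENNReal.ofReal (2 ^ n) * bmoNorm b * volume (ball z (2 * ρ)) := by
        gcongr
        exact oscInt_le_bmoNorm_mul z (by positivity)
    _ = ENNReal.ofReal (1 + 2 ^ n) * bmoNorm b * volume (ball z (2 * ρ)) := by
        rw [ENNReal.ofReal_add zero_le_one (by positivity), ENNReal.ofReal_one]
        ring

theorem ae_tendsto_oscInt_div (hb : LocallyIntegrable b volume) (c : ℝ) :
    ∀ᵐ x ∂volume, Tendsto (fun t => oscInt b (ball x t) c / volume (ball x t)) (𝓝[>] 0)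
      (𝓝 (‖b x - c‖₊ : ℝ≥0∞)) := by
  have hg : LocallyIntegrable (fun y => |b y - c|) volume :=
    locallyIntegrableOn_univ.1 ((hb.sub (locallyIntegrable_const c)).locallyIntegrableOn univ).norm
  filter_upwards [IsUnifLocDoublingMeasure.ae_tendsto_average volume hg 1] with x hx
  have hlim := (ENNReal.continuous_ofReal.tendsto _).comp
    (hx (fun _ => x) id tendsto_id (eventually_mem_nhdsWithin.mono fun t (ht : 0 < t) =>
      mem_closedBall_self (by simpa using ht.le)))
  rw [← Real.enorm_eq_ofReal_abs] at hlim
  refine hlim.congr' ?_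
  filter_upwards [self_mem_nhdsWithin] with t (ht : 0 < t)
  have hint : IntegrableOn (fun y => |b y - c|) (closedBall x t) volume :=
    hg.integrableOn_isCompact (isCompact_closedBall x t)
  rw [oscInt, setLIntegral_congr (ball_ae_eq_closedBall x ht.ne'),
    measure_congr (ball_ae_eq_closedBall x ht.ne'), Function.comp_apply, id,
    ofReal_setAverage hint (Eventually.of_forall fun _ => abs_nonneg _)]
  simp_rw [← Real.enorm_eq_ofReal_abs]
  rfl

end Oscillation

theorem exists_disjoint_ball_cover {α : Type*} [MetricSpace α] [TopologicalSpace.SeparableSpace α]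
    (E : Set α) (r : α → ℝ) {R : ℝ} (hr : ∀ x ∈ E, 0 < r x) (hrR : ∀ x ∈ E, r x ≤ R) :
    ∃ u ⊆ E, u.Countable ∧ u.PairwiseDisjoint (fun i => ball i (r i)) ∧
      E ⊆ ⋃ i ∈ u, ball i (5 * r i) := by
  obtain ⟨u, huE, hdisj, hcov⟩ :=
    Vitali.exists_disjoint_subfamily_covering_enlargement_closedBall E id r R hrR 4 (by norm_num)
  have hdisj' : u.PairwiseDisjoint (fun i => ball i (r i)) :=
    hdisj.mono fun i => ball_subset_closedBall
  refine ⟨u, huE, hdisj'.countable_of_nonempty_interior fun i hi => ?_, hdisj', fun x hx => ?_⟩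
  · rw [isOpen_ball.interior_eq]
    exact nonempty_ball.2 (hr i (huE hi))
  · obtain ⟨i, hi, hsub⟩ := hcov x hx
    have hxi := mem_closedBall.1 (hsub (mem_closedBall_self (hr x hx).le))
    exact mem_biUnion hi (mem_ball.2 (hxi.trans_lt (by linarith [hr i (huE hi)])))

/-- The stopping level of the selection: half of it is `5 ^ n * 2 ^ n * (1 + 2 ^ n)`, which
makes the enlarged stopping balls fill at most half of the ambient ball. -/
def jnLevel (n : ℕ) : ℝ := 2 * 10 ^ n * (1 + 2 ^ n)

/-- The stopping level, plus the bound `4 ^ n * (jnLevel n + (1 + 2 ^ n))` for the deviation of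
the mean over a stopping ball from `b_B`, plus the bound `5 ^ n` for the change of mean between a
stopping ball and its five-fold enlargement. -/
def jnStep (n : ℕ) : ℝ := jnLevel n + 4 ^ n * (jnLevel n + (1 + 2 ^ n)) + 5 ^ n

theorem jnLevel_pos (n : ℕ) : 0 < jnLevel n := by unfold jnLevel; positivity

theorem jnStep_pos (n : ℕ) : 0 < jnStep n := by
  have := jnLevel_pos n
  unfold jnStep
  positivity

def bmoDistrib {n : ℕ} (b : Rn n → ℝ) (M : ℝ) : ℝ≥0∞ :=
  ⨆ (z : Rn n) (ρ : ℝ) (_ : 0 < ρ),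
    volume {x ∈ ball z ρ | M < |b x - bmoAvg b z ρ|} / volume (ball z ρ)

section Distribution

variable {n : ℕ} {b : Rn n → ℝ}

theorem volume_lt_abs_sub_bmoAvg_le (M : ℝ) (z : Rn n) {ρ : ℝ} (hρ : 0 < ρ) :
    volume {x ∈ ball z ρ | M < |b x - bmoAvg b z ρ|} ≤ bmoDistrib b M * volume (ball z ρ) := by
  rw [← ENNReal.div_le_iff (measure_ball_pos volume z hρ).ne' measure_ball_lt_top.ne]
  exact le_iSup₂_of_le (f := fun z ρ => ⨆ _ : 0 < ρ, _) z ρ (le_iSup_of_le hρ le_rfl)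

theorem bmoDistrib_le_one (M : ℝ) : bmoDistrib b M ≤ 1 :=
  iSup₂_le fun z ρ => iSup_le fun hρ => by
    rw [ENNReal.div_le_iff (measure_ball_pos volume z hρ).ne' measure_ball_lt_top.ne, one_mul]
    exact measure_mono (sep_subset _ _)

theorem exists_stopping_ball (hb : LocallyIntegrable b volume) (hb1 : bmoNorm b ≤ 1)
    {z x : Rn n} {ρ l : ℝ} (hρ : 0 < ρ) (hl : 0 ≤ l) (hx : x ∈ ball z ρ)
    (hlim : Tendsto (fun t => oscInt b (ball x t) (bmoAvg b z ρ) / volume (ball x t)) (𝓝[>] 0)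
      (𝓝 (‖b x - bmoAvg b z ρ‖₊ : ℝ≥0∞)))
    (hlx : ENNReal.ofReal l < ‖b x - bmoAvg b z ρ‖₊) :
    ∃ t, 0 < t ∧ t ≤ ρ ∧
      ENNReal.ofReal l * volume (ball x t) < oscInt b (ball x t) (bmoAvg b z ρ) ∧
      oscInt b (ball x t) (bmoAvg b z ρ) ≤
        ENNReal.ofReal (4 ^ n * (l + (1 + 2 ^ n))) * volume (ball x t) := by
  set c := bmoAvg b z ρ
  set S := {t : ℝ | 0 < t ∧ t ≤ ρ ∧ ENNReal.ofReal l * volume (ball x t) < oscInt b (ball x t) c}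
  obtain ⟨t₀, ht₀S⟩ : S.Nonempty := by
    obtain ⟨t, hlt, htρ⟩ := ((hlim.eventually (lt_mem_nhds hlx)).and
      (Ioo_mem_nhdsGT hρ)).exists
    refine ⟨t, htρ.1, htρ.2.le, ?_⟩
    rwa [ENNReal.lt_div_iff_mul_lt (Or.inl (measure_ball_pos volume x htρ.1).ne')
      (Or.inl measure_ball_lt_top.ne)] at hlt
  have hSbdd : BddAbove S := ⟨ρ, fun t ht => ht.2.1⟩
  obtain ⟨t, ⟨ht, htρ, hlow⟩, hTt⟩ := exists_lt_of_lt_csSup ⟨t₀, ht₀S⟩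
    (half_lt_self (ht₀S.1.trans_le (le_csSup hSbdd ht₀S)))
  refine ⟨t, ht, htρ, hlow, ?_⟩
  have h4 : (2 : ℝ) ^ n ≤ 4 ^ n := pow_le_pow_left₀ zero_le_two (by norm_num) n
  rcases le_or_gt (2 * t) ρ with h2t | h2t
  · -- `2t` is not a stopping radius, since it exceeds `sup S`
    have hstop : oscInt b (ball x (2 * t)) c ≤ ENNReal.ofReal l * volume (ball x (2 * t)) :=
      not_lt.1 fun hlt => (le_csSup hSbdd ⟨by positivity, h2t, hlt⟩).not_gt (by linarith)
    calc oscInt b (ball x t) c ≤ oscInt b (ball x (2 * t)) c := oscInt_mono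
          (ball_subset_ball (by linarith)) c
      _ ≤ ENNReal.ofReal (l * 2 ^ n) * volume (ball x t) := by
          rw [ENNReal.ofReal_mul hl, mul_assoc, ← volume_ball_mul x two_pos]
          exact hstop
      _ ≤ _ := mul_le_mul_left (ENNReal.ofReal_le_ofReal (by
          nlinarith [mul_le_mul_of_nonneg_left h4 hl,
            mul_nonneg (pow_pos four_pos n).le (by positivity : (0 : ℝ) ≤ 1 + 2 ^ n)])) _
  · calc oscInt b (ball x t) c ≤ oscInt b (ball z (2 * ρ)) c := by
          refine oscInt_mono (fun y hy => ?_) c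
          rw [mem_ball] at hx hy ⊢
          linarith [dist_triangle y x z]
      _ ≤ ENNReal.ofReal (1 + 2 ^ n) * 1 * volume (ball z (2 * ρ)) :=
          (oscInt_ball_two_mul_le hb z hρ).trans (by gcongr)
      _ ≤ ENNReal.ofReal (1 + 2 ^ n) * (ENNReal.ofReal (4 ^ n) * volume (ball x t)) := by
          rw [mul_one]
          gcongr
          exact volume_ball_le_mul z x (by norm_num) (by linarith)
      _ ≤ _ := by
          rw [← mul_assoc, ← ENNReal.ofReal_mul (by positivity)]
          exact mul_le_mul_left (ENNReal.ofReal_le_ofReal (by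
            nlinarith [pow_pos (four_pos : (0 : ℝ) < 4) n, pow_pos (two_pos : (0 : ℝ) < 2) n])) _

theorem volume_lt_abs_sub_ball_five_mul_le (hb : LocallyIntegrable b volume)
    (hb1 : bmoNorm b ≤ 1) (i : Rn n) {t U : ℝ} (ht : 0 < t) (hU : 0 ≤ U) (c M : ℝ)
    (hosc : oscInt b (ball i t) c ≤ ENNReal.ofReal U * volume (ball i t)) :
    volume {x ∈ ball i (5 * t) | M + (U + 5 ^ n) < |b x - c|} ≤
      bmoDistrib b M * volume (ball i (5 * t)) := by
  have hpos := (measure_ball_pos volume i ht).ne'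
  have hc : |bmoAvg b i t - c| ≤ U := by
    refine (ENNReal.ofReal_le_ofReal_iff hU).1 ((ENNReal.mul_le_mul_iff_left hpos
      measure_ball_lt_top.ne).1 ((ofReal_abs_bmoAvg_sub_mul_le hb i ht c).trans hosc))
  have h5 : |bmoAvg b i t - bmoAvg b i (5 * t)| ≤ 5 ^ n := by
    refine (ENNReal.ofReal_le_ofReal_iff (by positivity)).1 ?_
    calc ENNReal.ofReal |bmoAvg b i t - bmoAvg b i (5 * t)|
        ≤ ENNReal.ofReal (5 ^ n) * bmoNorm b :=
          ofReal_abs_bmoAvg_sub_bmoAvg_le hb i (by norm_num) ht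
      _ ≤ ENNReal.ofReal (5 ^ n) := mul_le_of_le_one_right' hb1
  have hsub : {x ∈ ball i (5 * t) | M + (U + 5 ^ n) < |b x - c|} ⊆
      {x ∈ ball i (5 * t) | M < |b x - bmoAvg b i (5 * t)|} := by
    refine fun x hx => ⟨hx.1, ?_⟩
    have h1 := abs_sub_le (b x) (bmoAvg b i (5 * t)) c
    have h2 := abs_sub_le (bmoAvg b i (5 * t)) (bmoAvg b i t) c
    rw [abs_sub_comm] at h5
    linarith [hx.2]
  exact (measure_mono hsub).trans (volume_lt_abs_sub_bmoAvg_le M i (by positivity))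

theorem tsum_oscInt_ball_le (hb : LocallyIntegrable b volume) (hb1 : bmoNorm b ≤ 1) (z : Rn n)
    {ρ : ℝ} (hρ : 0 < ρ) {u : Set (Rn n)} (hu : u.Countable) (r : Rn n → ℝ)
    (hdisj : u.PairwiseDisjoint fun i => ball i (r i)) (hball : ∀ i ∈ u, i ∈ ball z ρ ∧ r i ≤ ρ) :
    ∑' i : u, oscInt b (ball (i : Rn n) (r i)) (bmoAvg b z ρ) ≤
      ENNReal.ofReal ((1 + 2 ^ n) * 2 ^ n) * volume (ball z ρ) := by
  have := hu.to_subtype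
  have hunion : ⋃ i : u, ball (i : Rn n) (r i) ⊆ ball z (2 * ρ) := by
    refine iUnion_subset fun i y hy => ?_
    obtain ⟨hiz, hiρ⟩ := hball i.1 i.2
    rw [mem_ball] at hiz hy ⊢
    linarith [dist_triangle y i z]
  calc ∑' i : u, oscInt b (ball (i : Rn n) (r i)) (bmoAvg b z ρ)
      = oscInt b (⋃ i : u, ball (i : Rn n) (r i)) (bmoAvg b z ρ) :=
        (lintegral_iUnion (fun _ => measurableSet_ball)
          (hdisj.on_injective Subtype.coe_injective Subtype.coe_prop) _).symm
    _ ≤ ENNReal.ofReal (1 + 2 ^ n) * 1 * volume (ball z (2 * ρ)) :=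
        (oscInt_mono hunion _).trans ((oscInt_ball_two_mul_le hb z hρ).trans (by gcongr))
    _ = ENNReal.ofReal ((1 + 2 ^ n) * 2 ^ n) * volume (ball z ρ) := by
        rw [volume_ball_mul z two_pos, mul_one, ← mul_assoc,
          ← ENNReal.ofReal_mul (by positivity)]

theorem tsum_volume_ball_five_mul_le (hb : LocallyIntegrable b volume) (hb1 : bmoNorm b ≤ 1)
    (z : Rn n) {ρ : ℝ} (hρ : 0 < ρ) {u : Set (Rn n)} (hu : u.Countable) (r : Rn n → ℝ)
    (hdisj : u.PairwiseDisjoint fun i => ball i (r i))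
    (hball : ∀ i ∈ u, i ∈ ball z ρ ∧ r i ≤ ρ ∧
      ENNReal.ofReal (jnLevel n) * volume (ball i (r i)) <
        oscInt b (ball i (r i)) (bmoAvg b z ρ)) :
    ∑' i : u, volume (ball (i : Rn n) (5 * r i)) ≤ 2⁻¹ * volume (ball z ρ) := by
  set K := ENNReal.ofReal (10 ^ n * (1 + 2 ^ n)) with hKdef
  have hK : K ≠ 0 := (ENNReal.ofReal_pos.2 (by positivity)).ne'
  have hlevel : ENNReal.ofReal (jnLevel n) = 2 * K := by
    rw [jnLevel, mul_assoc, ENNReal.ofReal_mul zero_le_two, ENNReal.ofReal_ofNat]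
  have hfive : K * (2 * ∑' i : u, volume (ball (i : Rn n) (5 * r i))) ≤
      K * volume (ball z ρ) :=
    calc K * (2 * ∑' i : u, volume (ball (i : Rn n) (5 * r i)))
        = ENNReal.ofReal (5 ^ n) * ∑' i : u, ENNReal.ofReal (jnLevel n) *
            volume (ball (i : Rn n) (r i)) := by
          simp_rw [volume_ball_mul _ (by norm_num : (0 : ℝ) < 5), ENNReal.tsum_mul_left,
            hlevel]
          ring
      _ ≤ ENNReal.ofReal (5 ^ n) * ∑' i : u, oscInt b (ball (i : Rn n) (r i)) (bmoAvg b z ρ) :=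
          mul_le_mul_right (ENNReal.tsum_le_tsum fun i : u => (hball i i.2).2.2.le) _
      _ ≤ ENNReal.ofReal (5 ^ n) * (ENNReal.ofReal ((1 + 2 ^ n) * 2 ^ n) * volume (ball z ρ)) :=
          mul_le_mul_right (tsum_oscInt_ball_le hb hb1 z hρ hu r hdisj fun i hi =>
            ⟨(hball i hi).1, (hball i hi).2.1⟩) _
      _ = K * volume (ball z ρ) := by
          rw [← mul_assoc, ← ENNReal.ofReal_mul (by positivity), hKdef,
            show (10 : ℝ) ^ n = 5 ^ n * 2 ^ n by rw [← mul_pow]; norm_num]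
          congr 2
          ring
  calc ∑' i : u, volume (ball (i : Rn n) (5 * r i))
      = 2⁻¹ * (2 * ∑' i : u, volume (ball (i : Rn n) (5 * r i))) :=
        (ENNReal.inv_mul_cancel_left two_ne_zero ENNReal.ofNat_ne_top).symm
    _ ≤ 2⁻¹ * volume (ball z ρ) :=
        mul_le_mul_right ((ENNReal.mul_le_mul_iff_right hK ENNReal.ofReal_ne_top).1 hfive) _

theorem volume_lt_abs_sub_bmoAvg_add_jnStep_le (hb : LocallyIntegrable b volume)
    (hb1 : bmoNorm b ≤ 1) {M : ℝ} (hM : 0 ≤ M) (z : Rn n) {ρ : ℝ} (hρ : 0 < ρ) :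
    volume {x ∈ ball z ρ | M + jnStep n < |b x - bmoAvg b z ρ|} ≤
      2⁻¹ * (bmoDistrib b M * volume (ball z ρ)) := by
  set c := bmoAvg b z ρ
  set U := 4 ^ n * (jnLevel n + (1 + 2 ^ n))
  have hU : 0 ≤ U := by have := jnLevel_pos n; positivity
  set L := {x | Tendsto (fun t => oscInt b (ball x t) c / volume (ball x t)) (𝓝[>] 0)
    (𝓝 (‖b x - c‖₊ : ℝ≥0∞))}
  have hL : volume Lᶜ = 0 := ae_tendsto_oscInt_div hb c
  set T := {x ∈ ball z ρ | M + jnStep n < |b x - c|}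
  have hstop : ∀ x ∈ T ∩ L, ∃ t, 0 < t ∧ t ≤ ρ ∧
      ENNReal.ofReal (jnLevel n) * volume (ball x t) < oscInt b (ball x t) c ∧
      oscInt b (ball x t) c ≤ ENNReal.ofReal U * volume (ball x t) := by
    refine fun x ⟨⟨hxB, hxM⟩, hxL⟩ => exists_stopping_ball hb hb1 hρ (jnLevel_pos n).le hxB hxL ?_
    rw [← enorm_eq_nnnorm, Real.enorm_eq_ofReal_abs]
    refine (ENNReal.ofReal_lt_ofReal_iff_of_nonneg (jnLevel_pos n).le).2 ?_
    have : 0 ≤ U + 5 ^ n := by positivity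
    linarith [show jnStep n = jnLevel n + U + 5 ^ n from rfl]
  choose! r hr0 hrρ hlow hup using hstop
  obtain ⟨u, huE, hu, hdisj, hcov⟩ := exists_disjoint_ball_cover (T ∩ L) r hr0 hrρ
  have hTcov : T ⊆ (⋃ i ∈ u, {x ∈ ball i (5 * r i) | M + (U + 5 ^ n) < |b x - c|}) ∪ Lᶜ := by
    intro x hx
    by_cases hxL : x ∈ L
    · obtain ⟨i, hi, hxi⟩ := mem_iUnion₂.1 (hcov ⟨hx, hxL⟩)
      refine Or.inl (mem_biUnion hi ⟨hxi, ?_⟩)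
      linarith [hx.2, jnLevel_pos n, show jnStep n = jnLevel n + U + 5 ^ n from rfl]
    · exact Or.inr hxL
  calc volume T
      ≤ ∑' i : u, volume {x ∈ ball (i : Rn n) (5 * r i) | M + (U + 5 ^ n) < |b x - c|} := by
        refine (measure_mono hTcov).trans ((measure_union_le _ _).trans ?_)
        rw [hL, add_zero]
        exact measure_biUnion_le _ hu _
    _ ≤ ∑' i : u, bmoDistrib b M * volume (ball (i : Rn n) (5 * r i)) :=
        ENNReal.tsum_le_tsum fun i : u => volume_lt_abs_sub_ball_five_mul_le hb hb1 i
          (hr0 i (huE i.2)) hU c M (hup i (huE i.2))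
    _ = bmoDistrib b M * ∑' i : u, volume (ball (i : Rn n) (5 * r i)) := ENNReal.tsum_mul_left
    _ ≤ bmoDistrib b M * (2⁻¹ * volume (ball z ρ)) :=
        mul_le_mul_right (tsum_volume_ball_five_mul_le hb hb1 z hρ hu r hdisj fun i hi =>
          ⟨(huE hi).1.1, hrρ i (huE hi), hlow i (huE hi)⟩) _
    _ = 2⁻¹ * (bmoDistrib b M * volume (ball z ρ)) := by ring

theorem bmoDistrib_add_jnStep_le (hb : LocallyIntegrable b volume) (hb1 : bmoNorm b ≤ 1)
    {M : ℝ} (hM : 0 ≤ M) : bmoDistrib b (M + jnStep n) ≤ 2⁻¹ * bmoDistrib b M :=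
  iSup₂_le fun z ρ => iSup_le fun hρ => by
    rw [ENNReal.div_le_iff (measure_ball_pos volume z hρ).ne' measure_ball_lt_top.ne, mul_assoc]
    exact volume_lt_abs_sub_bmoAvg_add_jnStep_le hb hb1 hM z hρ

theorem bmoDistrib_natCast_mul_jnStep_le (hb : LocallyIntegrable b volume) (hb1 : bmoNorm b ≤ 1)
    (k : ℕ) : bmoDistrib b (k * jnStep n) ≤ 2⁻¹ ^ k := by
  induction k with
  | zero => simpa using bmoDistrib_le_one 0
  | succ k ih =>
    have hk : 0 ≤ (k : ℝ) * jnStep n := mul_nonneg k.cast_nonneg (jnStep_pos n).le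
    calc bmoDistrib b ((k + 1 : ℕ) * jnStep n) = bmoDistrib b (k * jnStep n + jnStep n) := by
          push_cast; ring_nf
      _ ≤ 2⁻¹ * 2⁻¹ ^ k := (bmoDistrib_add_jnStep_le hb hb1 hk).trans (mul_le_mul_right ih _)
      _ = 2⁻¹ ^ (k + 1) := (pow_succ' _ _).symm

end Distribution

theorem summable_succ_rpow_mul_geometric (p : ℝ) {r : ℝ} (hr0 : 0 < r) (hr1 : r < 1) :
    Summable fun k : ℕ => ((k : ℝ) + 1) ^ p * r ^ k := by
  have h := summable_pow_mul_geometric_of_norm_lt_one (R := ℝ) ⌈p⌉₊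
    (by rwa [Real.norm_of_nonneg hr0.le] : ‖r‖ < 1)
  have h1 : Summable fun k : ℕ => ((k + 1 : ℕ) : ℝ) ^ ⌈p⌉₊ * r ^ (k + 1) :=
    (summable_nat_add_iff 1).2 h
  have hN : Summable fun k : ℕ => ((k : ℝ) + 1) ^ ⌈p⌉₊ * r ^ k :=
    (h1.mul_left r⁻¹).congr fun k => by
      push_cast
      field_simp
      ring
  refine hN.of_nonneg_of_le (fun k => by positivity) fun k => ?_
  gcongr
  rw [← Real.rpow_natCast]
  exact Real.rpow_le_rpow_of_exponent_le (by linarith [k.cast_nonneg (α := ℝ)]) (Nat.le_ceil p)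

def jnConst (n : ℕ) (p : ℝ) : ℝ := ∑' k : ℕ, (((k : ℝ) + 1) * jnStep n) ^ p * (2 * 2⁻¹ ^ k)

theorem summable_jnConst (n : ℕ) (p : ℝ) :
    Summable fun k : ℕ => (((k : ℝ) + 1) * jnStep n) ^ p * (2 * 2⁻¹ ^ k) := by
  refine ((summable_succ_rpow_mul_geometric p (r := 2⁻¹) (by norm_num) (by norm_num)).mul_left
    (2 * jnStep n ^ p)).congr fun k => ?_
  rw [Real.mul_rpow (by positivity) (jnStep_pos n).le]
  ring

theorem jnConst_pos (n : ℕ) (p : ℝ) : 0 < jnConst n p := by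
  have := jnStep_pos n
  exact (summable_jnConst n p).tsum_pos (fun k => by positivity) 0 (by positivity)

section JohnNirenberg

variable {n : ℕ}

theorem volume_natCast_mul_jnStep_le_abs_sub_bmoAvg_le {b : Rn n → ℝ}
    (hb : LocallyIntegrable b volume) (hb1 : bmoNorm b ≤ 1) (z : Rn n) {ρ : ℝ} (hρ : 0 < ρ)
    (k : ℕ) :
    volume {x ∈ ball z ρ | k * jnStep n ≤ |b x - bmoAvg b z ρ|} ≤
      ENNReal.ofReal (2 * 2⁻¹ ^ k) * volume (ball z ρ) := by
  cases k with
  | zero =>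
    refine (measure_mono (sep_subset _ _)).trans (le_mul_of_one_le_left' ?_)
    simp [ENNReal.ofReal_ofNat]
  | succ k =>
    have hsub : {x ∈ ball z ρ | ((k + 1 : ℕ) : ℝ) * jnStep n ≤ |b x - bmoAvg b z ρ|} ⊆
        {x ∈ ball z ρ | k * jnStep n < |b x - bmoAvg b z ρ|} := fun x hx =>
      ⟨hx.1, by push_cast at hx; linarith [hx.2, jnStep_pos n]⟩
    have hpow : ENNReal.ofReal (2 * 2⁻¹ ^ (k + 1)) = 2⁻¹ ^ k := by
      rw [pow_succ', ← mul_assoc, mul_inv_cancel₀ two_ne_zero, one_mul,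
        ENNReal.ofReal_pow (by norm_num), ENNReal.ofReal_inv_of_pos two_pos,
        ENNReal.ofReal_ofNat]
    rw [hpow]
    exact (measure_mono hsub).trans ((volume_lt_abs_sub_bmoAvg_le _ z hρ).trans
      (mul_le_mul_left (bmoDistrib_natCast_mul_jnStep_le hb hb1 k) _))

theorem lintegral_rpow_sub_bmoAvg_le_of_bmoNorm_le_one {b : Rn n → ℝ}
    (hb : LocallyIntegrable b volume) (hb1 : bmoNorm b ≤ 1) {p : ℝ} (hp : 0 ≤ p) (z : Rn n)
    {ρ : ℝ} (hρ : 0 < ρ) :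
    ∫⁻ x in ball z ρ, (‖b x - bmoAvg b z ρ‖₊ : ℝ≥0∞) ^ p ≤
      ENNReal.ofReal (jnConst n p) * volume (ball z ρ) := by
  set c := bmoAvg b z ρ
  set a := jnStep n
  have ha : 0 < a := jnStep_pos n
  set S : ℕ → Set (Rn n) := fun k => {x ∈ ball z ρ | k * a ≤ |b x - c| ∧ |b x - c| < (k + 1) * a}
  have hcov : ball z ρ ⊆ ⋃ k, S k := fun x hx => mem_iUnion.2 ⟨⌊|b x - c| / a⌋₊, hx,
    (le_div_iff₀ ha).1 (Nat.floor_le (by positivity)),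
    (div_lt_iff₀ ha).1 (Nat.lt_floor_add_one _)⟩
  have hS : ∀ k : ℕ, ∫⁻ x in S k, (‖b x - c‖₊ : ℝ≥0∞) ^ p ≤
      ENNReal.ofReal (((k + 1) * a) ^ p * (2 * 2⁻¹ ^ k)) * volume (ball z ρ) := by
    intro k
    calc ∫⁻ x in S k, (‖b x - c‖₊ : ℝ≥0∞) ^ p
        ≤ ∫⁻ _ in S k, ENNReal.ofReal (((k + 1) * a) ^ p) := by
          refine setLIntegral_mono measurable_const fun x hx => ?_
          rw [← enorm_eq_nnnorm, Real.enorm_eq_ofReal_abs,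
            ENNReal.ofReal_rpow_of_nonneg (abs_nonneg _) hp]
          exact ENNReal.ofReal_le_ofReal (Real.rpow_le_rpow (abs_nonneg _) hx.2.2.le hp)
      _ ≤ ENNReal.ofReal (((k + 1) * a) ^ p) *
            (ENNReal.ofReal (2 * 2⁻¹ ^ k) * volume (ball z ρ)) := by
          rw [setLIntegral_const]
          have hsub : S k ⊆ {x ∈ ball z ρ | k * a ≤ |b x - c|} := fun x hx => ⟨hx.1, hx.2.1⟩
          exact mul_le_mul_right ((measure_mono hsub).trans
            (volume_natCast_mul_jnStep_le_abs_sub_bmoAvg_le hb hb1 z hρ k)) _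
      _ = _ := by rw [← mul_assoc, ← ENNReal.ofReal_mul (by positivity)]
  calc ∫⁻ x in ball z ρ, (‖b x - c‖₊ : ℝ≥0∞) ^ p
      ≤ ∑' k, ∫⁻ x in S k, (‖b x - c‖₊ : ℝ≥0∞) ^ p :=
        (lintegral_mono_set hcov).trans (lintegral_iUnion_le _ _)
    _ ≤ ∑' k : ℕ, ENNReal.ofReal (((k + 1) * a) ^ p * (2 * 2⁻¹ ^ k)) * volume (ball z ρ) :=
        ENNReal.tsum_le_tsum hS
    _ = ENNReal.ofReal (jnConst n p) * volume (ball z ρ) := by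
        rw [ENNReal.tsum_mul_right, jnConst, ENNReal.ofReal_tsum_of_nonneg
          (fun k => by positivity) (summable_jnConst n p)]

theorem bmoAvg_const_mul (b : Rn n → ℝ) (t : ℝ) (z : Rn n) (ρ : ℝ) :
    bmoAvg (fun x => t * b x) z ρ = t * bmoAvg b z ρ := by
  simp only [bmoAvg, setAverage_eq, integral_const_mul, smul_eq_mul]
  ring

theorem bmoNorm_const_mul (b : Rn n → ℝ) {t : ℝ} (ht : 0 ≤ t) :
    bmoNorm (fun x => t * b x) = ENNReal.ofReal t * bmoNorm b := by
  have hpt : ∀ z ρ x, (‖t * b x - bmoAvg (fun x => t * b x) z ρ‖₊ : ℝ≥0∞) =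
      ENNReal.ofReal t * ‖b x - bmoAvg b z ρ‖₊ := fun z ρ x => by
    rw [bmoAvg_const_mul, ← mul_sub, ← enorm_eq_nnnorm, ← enorm_eq_nnnorm, enorm_mul,
      Real.enorm_of_nonneg ht]
  simp only [bmoNorm, hpt, ENNReal.mul_iSup]
  simp_rw [lintegral_const_mul' _ _ ENNReal.ofReal_ne_top, mul_div_assoc]

theorem lintegral_rpow_sub_bmoAvg_eq_zero {b : Rn n → ℝ} (hb : LocallyIntegrable b volume)
    (h0 : bmoNorm b = 0) {p : ℝ} (hp : 0 < p) (z : Rn n) {ρ : ℝ} (hρ : 0 < ρ) :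
    ∫⁻ x in ball z ρ, (‖b x - bmoAvg b z ρ‖₊ : ℝ≥0∞) ^ p = 0 := by
  have hosc : oscInt b (ball z ρ) (bmoAvg b z ρ) = 0 :=
    le_antisymm ((oscInt_le_bmoNorm_mul z hρ).trans_eq (by rw [h0, zero_mul])) zero_le
  have hae := (lintegral_eq_zero_iff' ((hb.aestronglyMeasurable.aemeasurable.sub
    aemeasurable_const).enorm.restrict)).1 hosc
  refine (lintegral_congr_ae ?_).trans lintegral_zero
  filter_upwards [hae] with x hx
  rw [Pi.zero_apply, Pi.sub_apply, enorm_eq_nnnorm] at hx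
  rw [hx, ENNReal.zero_rpow_of_pos hp]

theorem lintegral_rpow_sub_bmoAvg_le {b : Rn n → ℝ} (hb : LocallyIntegrable b volume) {p : ℝ}
    (hp : 0 < p) (z : Rn n) {ρ : ℝ} (hρ : 0 < ρ) :
    ∫⁻ x in ball z ρ, (‖b x - bmoAvg b z ρ‖₊ : ℝ≥0∞) ^ p ≤
      ENNReal.ofReal (jnConst n p) * bmoNorm b ^ p * volume (ball z ρ) := by
  rcases eq_or_ne (bmoNorm b) 0 with h0 | h0
  · rw [lintegral_rpow_sub_bmoAvg_eq_zero hb h0 hp z hρ]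
    exact zero_le
  rcases eq_or_ne (bmoNorm b) ⊤ with htop | htop
  · rw [htop, ENNReal.top_rpow_of_pos hp, ENNReal.mul_top (ENNReal.ofReal_pos.2
      (jnConst_pos n p)).ne', ENNReal.top_mul (measure_ball_pos volume z hρ).ne']
    exact le_top
  set t := (bmoNorm b).toReal
  have ht : 0 < t := ENNReal.toReal_pos h0 htop
  set b₁ : Rn n → ℝ := fun x => t⁻¹ * b x
  have hb₁ : bmoNorm b₁ = 1 := by
    rw [bmoNorm_const_mul b (inv_nonneg.2 ht.le), ENNReal.ofReal_inv_of_pos ht,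
      ENNReal.ofReal_toReal htop, ENNReal.inv_mul_cancel h0 htop]
  have hscale : ∀ x, (‖b x - bmoAvg b z ρ‖₊ : ℝ≥0∞) ^ p =
      bmoNorm b ^ p * (‖b₁ x - bmoAvg b₁ z ρ‖₊ : ℝ≥0∞) ^ p := fun x => by
    rw [← ENNReal.mul_rpow_of_nonneg _ _ hp.le, bmoAvg_const_mul, ← mul_sub,
      ← enorm_eq_nnnorm, ← enorm_eq_nnnorm, enorm_mul, Real.enorm_of_nonneg
      (inv_nonneg.2 ht.le), ← mul_assoc, ENNReal.ofReal_inv_of_pos ht,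
      ENNReal.ofReal_toReal htop, ENNReal.mul_inv_cancel h0 htop, one_mul]
  rw [lintegral_congr hscale, lintegral_const_mul' _ _ (ENNReal.rpow_ne_top_of_nonneg hp.le htop),
    mul_comm (ENNReal.ofReal _), mul_assoc]
  exact mul_le_mul_right
    (lintegral_rpow_sub_bmoAvg_le_of_bmoNorm_le_one (hb.smul t⁻¹) hb₁.le hp.le z hρ) _

end JohnNirenberg

theorem lintegral_mul_le_Lp_mul_Lq_of_aemeasurable_left {α : Type*} [MeasurableSpace α]
    (μ : Measure α) {p q : ℝ} (hpq : p.HolderConjugate q) {f g : α → ℝ≥0∞}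
    (hf : AEMeasurable f μ) (hf_top : ∀ᵐ x ∂μ, f x ≠ ⊤) :
    ∫⁻ x, f x * g x ∂μ ≤ (∫⁻ x, f x ^ p ∂μ) ^ (1 / p) * (∫⁻ x, g x ^ q ∂μ) ^ (1 / q) := by
  -- replace `g` by `φ / f ≤ g`, where `φ ≤ f * g` is measurable with the same integral
  obtain ⟨φ, hφ, hφle, hφeq⟩ := exists_measurable_le_lintegral_eq μ fun x => f x * g x
  have hνg : ∀ x, φ x / f x ≤ g x := fun x =>
    ENNReal.div_le_of_le_mul ((hφle x).trans_eq (mul_comm _ _))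
  have hφν : ∀ᵐ x ∂μ, φ x ≤ f x * (φ x / f x) := by
    filter_upwards [hf_top] with x hx
    rcases eq_or_ne (f x) 0 with h0 | h0
    · simpa [h0] using hφle x
    · rw [ENNReal.mul_div_cancel h0 hx]
  calc ∫⁻ x, f x * g x ∂μ = ∫⁻ x, φ x ∂μ := hφeq
    _ ≤ ∫⁻ x, (f * fun x => φ x / f x) x ∂μ := lintegral_mono_ae hφν
    _ ≤ (∫⁻ x, f x ^ p ∂μ) ^ (1 / p) * (∫⁻ x, (φ x / f x) ^ q ∂μ) ^ (1 / q) :=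
        ENNReal.lintegral_mul_le_Lp_mul_Lq μ hpq hf (hφ.aemeasurable.div hf)
    _ ≤ (∫⁻ x, f x ^ p ∂μ) ^ (1 / p) * (∫⁻ x, g x ^ q ∂μ) ^ (1 / q) := by
        gcongr with x
        · exact one_div_nonneg.2 hpq.symm.nonneg
        · exact hpq.symm.nonneg
        · exact hνg x

theorem IsRH.rpow_lintegral_mul_le {n : ℕ} {r s : ℝ} {A : ℝ≥0∞} {μ : Rn n → ℝ≥0∞}
    (hμ : IsRH r A μ) (hrs : r.HolderConjugate s) (z : Rn n) {ρ : ℝ} (hρ : 0 < ρ) :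
    (∫⁻ x in ball z ρ, μ x ^ r) ^ (1 / r) * volume (ball z ρ) ^ (1 / s) ≤ A * wInt μ z ρ := by
  set V := volume (ball z ρ)
  have hV0 : V ≠ 0 := (measure_ball_pos volume z hρ).ne'
  have hVtop : V ≠ ⊤ := measure_ball_lt_top.ne
  have hexp : 1 / r + 1 / s = 1 := by simpa using hrs.one_div_add_one_div
  calc (∫⁻ x in ball z ρ, μ x ^ r) ^ (1 / r) * V ^ (1 / s)
      = ((∫⁻ x in ball z ρ, μ x ^ r) / V) ^ (1 / r) * V := by
        conv_lhs => rw [← ENNReal.div_mul_cancel hV0 hVtop (b := ∫⁻ x in ball z ρ, μ x ^ r)]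
        rw [ENNReal.mul_rpow_of_nonneg _ _ (one_div_nonneg.2 hrs.nonneg), mul_assoc,
          ← ENNReal.rpow_add _ _ hV0 hVtop, hexp, ENNReal.rpow_one]
    _ ≤ A * (wInt μ z ρ / V) * V := mul_le_mul_left (hμ z ρ hρ) V
    _ = A * wInt μ z ρ := by rw [mul_assoc, ENNReal.div_mul_cancel hV0 hVtop]

theorem lintegral_rpow_sub_bmoAvg_mul_le {n : ℕ} {q r s : ℝ} {A : ℝ≥0∞} {μ : Rn n → ℝ≥0∞}
    {b : Rn n → ℝ} (hb : LocallyIntegrable b volume) (hq : 0 < q) (hμ : IsRH r A μ)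
    (hsr : s.HolderConjugate r) (z : Rn n) {ρ : ℝ} (hρ : 0 < ρ) :
    ∫⁻ x in ball z ρ, (‖b x - bmoAvg b z ρ‖₊ : ℝ≥0∞) ^ q * μ x ≤
      ENNReal.ofReal (jnConst n (q * s)) ^ (1 / s) * A * bmoNorm b ^ q * wInt μ z ρ := by
  set c := bmoAvg b z ρ
  set V := volume (ball z ρ)
  set C := ENNReal.ofReal (jnConst n (q * s))
  have hs := hsr.pos
  have hF : AEMeasurable (fun x => (‖b x - c‖₊ : ℝ≥0∞) ^ q) (volume.restrict (ball z ρ)) :=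
    ((hb.aestronglyMeasurable.aemeasurable.sub aemeasurable_const).enorm.pow_const q).restrict
  have hFtop : ∀ᵐ x ∂volume.restrict (ball z ρ), (‖b x - c‖₊ : ℝ≥0∞) ^ q ≠ ⊤ :=
    ae_of_all _ fun x => ENNReal.rpow_ne_top_of_nonneg hq.le ENNReal.coe_ne_top
  have hJN : ∫⁻ x in ball z ρ, ((‖b x - c‖₊ : ℝ≥0∞) ^ q) ^ s ≤ C * bmoNorm b ^ (q * s) * V := by
    simp_rw [← ENNReal.rpow_mul]
    exact lintegral_rpow_sub_bmoAvg_le hb (mul_pos hq hs) z hρ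
  calc ∫⁻ x in ball z ρ, (‖b x - c‖₊ : ℝ≥0∞) ^ q * μ x
      ≤ (∫⁻ x in ball z ρ, ((‖b x - c‖₊ : ℝ≥0∞) ^ q) ^ s) ^ (1 / s) *
          (∫⁻ x in ball z ρ, μ x ^ r) ^ (1 / r) :=
        lintegral_mul_le_Lp_mul_Lq_of_aemeasurable_left _ hsr hF hFtop
    _ ≤ (C * bmoNorm b ^ (q * s) * V) ^ (1 / s) * (∫⁻ x in ball z ρ, μ x ^ r) ^ (1 / r) := by
        gcongr
    _ = C ^ (1 / s) * bmoNorm b ^ q *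
          ((∫⁻ x in ball z ρ, μ x ^ r) ^ (1 / r) * V ^ (1 / s)) := by
        rw [ENNReal.mul_rpow_of_nonneg _ _ (by positivity),
          ENNReal.mul_rpow_of_nonneg _ _ (by positivity), ← ENNReal.rpow_mul,
          show q * s * (1 / s) = q by field_simp]
        ring
    _ ≤ C ^ (1 / s) * bmoNorm b ^ q * (A * wInt μ z ρ) :=
        mul_le_mul_right (hμ.rpow_lintegral_mul_le hsr.symm z hρ) _
    _ = C ^ (1 / s) * A * bmoNorm b ^ q * wInt μ z ρ := by ring

theorem stmt4_general (n : ℕ) (q r : ℝ) (hq : 1 < q) (hr : 1 < r)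
    (A : ℝ≥0∞) (hA : A ≠ ⊤) :
    ∃ C : ℝ≥0∞, 0 < C ∧ C ≠ ⊤ ∧
      ∀ μ : Rn n → ℝ≥0∞, IsRH r A μ →
        ∀ b : Rn n → ℝ, MeasureTheory.LocallyIntegrable b volume →
          ∀ (z : Rn n) (ρ : ℝ), 0 < ρ →
            (∫⁻ x in ball z ρ, (‖b x - bmoAvg b z ρ‖₊ : ℝ≥0∞) ^ q * μ x) ^ (1 / q) ≤
              C * bmoNorm b * (wInt μ z ρ) ^ (1 / q) := by
  set s := r.conjExponent
  have hsr : s.HolderConjugate r := (Real.HolderConjugate.conjExponent hr).symm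
  set K := ENNReal.ofReal (jnConst n (q * s)) ^ (1 / s) * A
  have hK : K ≠ ⊤ := ENNReal.mul_ne_top
    (ENNReal.rpow_ne_top_of_nonneg (one_div_nonneg.2 hsr.nonneg) ENNReal.ofReal_ne_top) hA
  have hq' : 0 ≤ 1 / q := by positivity
  refine ⟨K ^ (1 / q) + 1, by positivity,
    ENNReal.add_ne_top.2 ⟨ENNReal.rpow_ne_top_of_nonneg hq' hK, ENNReal.one_ne_top⟩,
    fun μ hμ b hb z ρ hρ => ?_⟩
  calc (∫⁻ x in ball z ρ, (‖b x - bmoAvg b z ρ‖₊ : ℝ≥0∞) ^ q * μ x) ^ (1 / q)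
      ≤ (K * bmoNorm b ^ q * wInt μ z ρ) ^ (1 / q) :=
        ENNReal.rpow_le_rpow (lintegral_rpow_sub_bmoAvg_mul_le hb (by linarith) hμ hsr z hρ) hq'
    _ = K ^ (1 / q) * bmoNorm b * wInt μ z ρ ^ (1 / q) := by
        rw [ENNReal.mul_rpow_of_nonneg _ _ hq', ENNReal.mul_rpow_of_nonneg _ _ hq',
          ← ENNReal.rpow_mul, mul_one_div_cancel (by linarith), ENNReal.rpow_one]
    _ ≤ (K ^ (1 / q) + 1) * bmoNorm b * wInt μ z ρ ^ (1 / q) := by gcongr; exact le_self_add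

/-- weighted John–Nirenberg type bound for `μ ∈ RH_r`. -/
theorem stmt4 (n : ℕ) (hn : 0 < n) (q r : ℝ) (hq : 1 < q) (hr : 1 < r)
    (A : ℝ≥0∞) (hA : A ≠ ⊤) :
    ∃ C : ℝ≥0∞, 0 < C ∧ C ≠ ⊤ ∧
      ∀ μ : Rn n → ℝ≥0∞, IsRH r A μ →
        ∀ b : Rn n → ℝ, MeasureTheory.LocallyIntegrable b volume →
          ∀ (z : Rn n) (ρ : ℝ), 0 < ρ →
            (∫⁻ x in ball z ρ, (‖b x - bmoAvg b z ρ‖₊ : ℝ≥0∞) ^ q * μ x) ^ (1 / q) ≤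
              C * bmoNorm b * (wInt μ z ρ) ^ (1 / q) :=
  stmt4_general n q r hq hr A hA
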